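/- arXiv:hep-th/0104092 — 3 statements merged into one kernel-verified Lean document; each statement's English description precedes it below -/
import Mathlib

section
/- Let Ω ⊆ ℝ^n be open (n ≥ 2), let β_{ij}: Ω → ℂ be smooth functions for all i ≠ j in {1,…,n}, let λ ∈ ℂ, and let γ: Ω → Mat_n(ℂ) be a smooth map with γ(u) invertible for every u ∈ Ω, such that ∂_i γ_{jk} = β_{ji} γ_{ik} for all i ≠ j and all k, and Σ_{j=1}^n ∂_j γ_{ik} = λ γ_{ik} for all i, k. Then the rotation coefficients β_{ij} satisfy ∂_k β_{ij} = β_{ik} β_{kj} for all pairwise distinct i, j, k, and Σ_{k=1}^n ∂_k β_{ij} = 0 for all i ≠ j. -/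
/-- The partial derivative `∂_i f` of a function `f : ℝⁿ → ℂ` at a point `u`. -/
noncomputable def pd {n : ℕ} (i : Fin n) (f : (Fin n → ℝ) → ℂ) (u : Fin n → ℝ) : ℂ :=
  fderiv ℝ f u (Pi.single i 1)


lemma pd_congr {n : ℕ} {i : Fin n} {f g : (Fin n → ℝ) → ℂ} {u : Fin n → ℝ}
    (h : f =ᶠ[nhds u] g) : pd i f u = pd i g u := by
  unfold pd; rw [h.fderiv_eq]

lemma pd_mul {n : ℕ} {i : Fin n} {f g : (Fin n → ℝ) → ℂ} {u : Fin n → ℝ}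
    (hf : DifferentiableAt ℝ f u) (hg : DifferentiableAt ℝ g u) :
    pd i (fun v => f v * g v) u = pd i f u * g u + f u * pd i g u := by
  unfold pd
  rw [fderiv_fun_mul hf hg]
  simp [smul_eq_mul]
  ring

lemma pd_const_mul {n : ℕ} {i : Fin n} {c : ℂ} {f : (Fin n → ℝ) → ℂ} {u : Fin n → ℝ}
    (hf : DifferentiableAt ℝ f u) :
    pd i (fun v => c * f v) u = c * pd i f u := by
  unfold pd; rw [fderiv_const_mul hf]; simp

lemma pd_sum {n : ℕ} {i : Fin n} {f : Fin n → (Fin n → ℝ) → ℂ} {u : Fin n → ℝ}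
    (hf : ∀ l, DifferentiableAt ℝ (f l) u) :
    pd i (fun v => ∑ l, f l v) u = ∑ l, pd i (f l) u := by
  unfold pd
  rw [fderiv_fun_sum (fun l _ => hf l)]
  simp

lemma pd_contDiffAt {n : ℕ} {i : Fin n} {f : (Fin n → ℝ) → ℂ} {u : Fin n → ℝ}
    (hf : ContDiffAt ℝ (⊤ : ℕ∞) f u) : ContDiffAt ℝ (⊤ : ℕ∞) (pd i f) u := by
  have h := hf.fderiv_right (m := (⊤ : ℕ∞)) (by simp)
  exact (ContinuousLinearMap.apply ℝ ℂ (Pi.single i 1)).contDiff.contDiffAt.comp u h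

lemma pd_comm {n : ℕ} {i l : Fin n} {f : (Fin n → ℝ) → ℂ} {u : Fin n → ℝ}
    (hf : ContDiffAt ℝ (⊤ : ℕ∞) f u) :
    pd i (pd l f) u = pd l (pd i f) u := by
  have hdf : DifferentiableAt ℝ (fderiv ℝ f) u :=
    ((hf.fderiv_right (m := (⊤ : ℕ∞)) (by simp)).differentiableAt (by simp))
  have key : ∀ a b : Fin n, pd a (pd b f) u =
      fderiv ℝ (fderiv ℝ f) u (Pi.single a 1) (Pi.single b 1) := by
    intro a b
    show fderiv ℝ (fun v => (fderiv ℝ f v) (Pi.single b 1)) u (Pi.single a 1) = _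
    rw [fderiv_clm_apply hdf (differentiableAt_const _)]
    simp
  rw [key, key]
  exact (hf.isSymmSndFDerivAt (by rw [minSmoothness_of_isRCLikeNormedField]; exact WithTop.coe_le_coe.mpr (le_top : (2 : ℕ∞) ≤ ⊤))) _ _

lemma vecMul_cancel {n : ℕ} {M : Matrix (Fin n) (Fin n) ℂ} (hM : IsUnit M) {c : Fin n → ℂ}
    (h : ∀ m, ∑ l, c l * M l m = 0) : c = 0 := by
  have hdet : IsUnit M.det := (Matrix.isUnit_iff_isUnit_det M).mp hM
  have hinv : M * M⁻¹ = 1 := Matrix.mul_nonsing_inv M hdet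
  have h0 : Matrix.vecMul c M = 0 := by
    funext m
    simpa [Matrix.vecMul, dotProduct] using h m
  calc c = Matrix.vecMul c (M * M⁻¹) := by rw [hinv, Matrix.vecMul_one]
  _ = Matrix.vecMul (Matrix.vecMul c M) M⁻¹ := (Matrix.vecMul_vecMul _ _ _).symm
  _ = 0 := by rw [h0, Matrix.zero_vecMul]

/-- If an everywhere-invertible smooth matrix `γ` solves the linear system
`∂_i γ_{jk} = β_{ji} γ_{ik}` (`i ≠ j`), `Σ_j ∂_j γ_{ik} = λ γ_{ik}` on an open
set `Ω ⊆ ℝⁿ`, then the rotation coefficients `β_{ij}` satisfy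
`∂_k β_{ij} = β_{ik} β_{kj}` for pairwise distinct `i, j, k`, and
`Σ_k ∂_k β_{ij} = 0` for `i ≠ j`. -/
theorem rotation_coefficients_of_linear_system (n : ℕ) (hn : 2 ≤ n)
    (Ω : Set (Fin n → ℝ)) (hΩ : IsOpen Ω)
    (β : Fin n → Fin n → (Fin n → ℝ) → ℂ) (lam : ℂ)
    (γ : (Fin n → ℝ) → Fin n → Fin n → ℂ)
    (hβs : ∀ i j, i ≠ j → ContDiffOn ℝ (⊤ : ℕ∞) (β i j) Ω)
    (hγs : ∀ j k, ContDiffOn ℝ (⊤ : ℕ∞) (fun u => γ u j k) Ω)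
    (hγinv : ∀ u ∈ Ω, IsUnit (Matrix.of (γ u)))
    (h1 : ∀ u ∈ Ω, ∀ i j k : Fin n, i ≠ j →
      pd i (fun v => γ v j k) u = β j i u * γ u i k)
    (h2 : ∀ u ∈ Ω, ∀ i k : Fin n,
      ∑ j, pd j (fun v => γ v i k) u = lam * γ u i k) :
    (∀ u ∈ Ω, ∀ i j k : Fin n, i ≠ j → j ≠ k → i ≠ k →
      pd k (β i j) u = β i k u * β k j u) ∧
    (∀ u ∈ Ω, ∀ i j : Fin n, i ≠ j → ∑ k, pd k (β i j) u = 0) := by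
  have hγa : ∀ u ∈ Ω, ∀ j k, ContDiffAt ℝ (⊤ : ℕ∞) (fun v => γ v j k) u :=
    fun u hu j k => (hγs j k).contDiffAt (hΩ.mem_nhds hu)
  have hγd : ∀ u ∈ Ω, ∀ j k, DifferentiableAt ℝ (fun v => γ v j k) u :=
    fun u hu j k => (hγa u hu j k).differentiableAt (by simp)
  have hβd : ∀ i j, i ≠ j → ∀ u ∈ Ω, DifferentiableAt ℝ (β i j) u :=
    fun i j hij u hu =>
      (((hβs i j hij).contDiffAt (hΩ.mem_nhds hu)).differentiableAt (by simp))
  have hpdd : ∀ u ∈ Ω, ∀ l j k, DifferentiableAt ℝ (pd l fun v => γ v j k) u :=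
    fun u hu l j k => (pd_contDiffAt (hγa u hu j k)).differentiableAt (by simp)
  have hev1 : ∀ u ∈ Ω, ∀ a b m : Fin n, a ≠ b →
      (pd a fun v => γ v b m) =ᶠ[nhds u] (fun v => β b a v * γ v a m) :=
    fun u hu a b m hab =>
      Filter.eventuallyEq_of_mem (hΩ.mem_nhds hu) (fun v hv => h1 v hv a b m hab)
  constructor
  · intro u hu i j k hij hjk hik
    have key : ∀ m, (pd k (β i j) u - β i k u * β k j u) * γ u j m
        + (β i j u * β j k u - pd j (β i k) u) * γ u k m = 0 := by
      intro m
      have E1 : pd j (pd k fun v => γ v i m) u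
          = pd j (β i k) u * γ u k m + β i k u * (β k j u * γ u j m) := by
        rw [pd_congr (hev1 u hu k i m hik.symm)]
        rw [pd_mul (hβd i k hik u hu) (hγd u hu k m)]
        rw [h1 u hu j k m hjk]
      have E2 : pd k (pd j fun v => γ v i m) u
          = pd k (β i j) u * γ u j m + β i j u * (β j k u * γ u k m) := by
        rw [pd_congr (hev1 u hu j i m hij.symm)]
        rw [pd_mul (hβd i j hij u hu) (hγd u hu j m)]
        rw [h1 u hu k j m hjk.symm]
      have E3 : pd j (pd k fun v => γ v i m) u = pd k (pd j fun v => γ v i m) u :=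
        pd_comm (hγa u hu i m)
      linear_combination E1 - E2 - E3
    have hc := vecMul_cancel (hγinv u hu)
      (c := fun l => (if l = j then (pd k (β i j) u - β i k u * β k j u) else 0)
        + (if l = k then (β i j u * β j k u - pd j (β i k) u) else 0)) ?_
    · have hj := congrFun hc j
      simp [hjk] at hj
      linear_combination hj
    · intro m
      simpa [add_mul, Finset.sum_add_distrib, ite_mul, Finset.sum_ite_eq'] using key m
  · intro u hu i j hij
    have key : ∀ m, (∑ l, pd l (β i j) u) * γ u j m = 0 := by
      intro m
      have E1 : ∑ l, pd l (pd j fun v => γ v i m) u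
          = (∑ l, pd l (β i j) u) * γ u j m + β i j u * (lam * γ u j m) := by
        have step : ∀ l, pd l (pd j fun v => γ v i m) u
            = pd l (β i j) u * γ u j m + β i j u * pd l (fun v => γ v j m) u := by
          intro l
          rw [pd_congr (hev1 u hu j i m hij.symm)]
          exact pd_mul (hβd i j hij u hu) (hγd u hu j m)
        rw [Finset.sum_congr rfl (fun l _ => step l), Finset.sum_add_distrib,
          ← Finset.sum_mul, ← Finset.mul_sum, h2 u hu j m]
      have E2 : ∑ l, pd l (pd j fun v => γ v i m) u = lam * (β i j u * γ u j m) := by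
        have comm : ∀ l, pd l (pd j fun v => γ v i m) u
            = pd j (pd l fun v => γ v i m) u :=
          fun l => pd_comm (hγa u hu i m)
        rw [Finset.sum_congr rfl (fun l _ => comm l),
          ← pd_sum (fun l => hpdd u hu l i m)]
        have hev2 : (fun v => ∑ l, pd l (fun w => γ w i m) v) =ᶠ[nhds u]
            (fun v => lam * γ v i m) :=
          Filter.eventuallyEq_of_mem (hΩ.mem_nhds hu) (fun v hv => h2 v hv i m)
        rw [pd_congr hev2, pd_const_mul (hγd u hu i m), h1 u hu j i m hij.symm]
      linear_combination E2 - E1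
    have hc := vecMul_cancel (hγinv u hu)
      (c := fun l => if l = j then (∑ l, pd l (β i j) u) else 0) ?_
    · have hj := congrFun hc j
      simpa using hj
    · intro m
      simpa [ite_mul, Finset.sum_ite_eq'] using key m
end

section
/- Let Ω ⊆ ℝ^n be open, let β_{ij}: Ω → ℂ (i ≠ j) be smooth symmetric functions (β_{ij} = β_{ji}), and let ψ_{ij}: Ω → ℂ (1 ≤ i, j ≤ n) be smooth functions satisfying ∂_j ψ_{ik} = β_{ij} ψ_{jk} for all i ≠ j and all k, and Σ_{k=1}^n ∂_k ψ_{ij} = 0 for all i, j. Then for every pair (α, β) the function η_{αβ}(u) = Σ_{i=1}^n ψ_{iα}(u) ψ_{iβ}(u) has all its partial derivatives ∂_k η_{αβ} identically zero on Ω (so η_{αβ} is locally constant). -/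
/-- For smooth symmetric rotation coefficients `β` and smooth solutions `ψ` of the
`λ = 0` Darboux–Egoroff linear system `∂_j ψ_{ik} = β_{ij} ψ_{jk}` (`i ≠ j`),
`Σ_k ∂_k ψ_{ij} = 0`, each function `η_{ab} = Σ_i ψ_{ia} ψ_{ib}` has all its
partial derivatives identically zero on `Ω`. -/
theorem flat_metric_locally_constant (n : ℕ) (Ω : Set (Fin n → ℝ)) (hΩ : IsOpen Ω)
    (β : Fin n → Fin n → (Fin n → ℝ) → ℂ)
    (ψ : Fin n → Fin n → (Fin n → ℝ) → ℂ)
    (hβs : ∀ i j, i ≠ j → ContDiffOn ℝ (⊤ : ℕ∞) (β i j) Ω)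
    (hψs : ∀ i j, ContDiffOn ℝ (⊤ : ℕ∞) (ψ i j) Ω)
    (hsym : ∀ u ∈ Ω, ∀ i j, i ≠ j → β i j u = β j i u)
    (hψ1 : ∀ u ∈ Ω, ∀ i j k : Fin n, i ≠ j →
      pd j (ψ i k) u = β i j u * ψ j k u)
    (hψ2 : ∀ u ∈ Ω, ∀ i j : Fin n, ∑ k, pd k (ψ i j) u = 0) :
    ∀ u ∈ Ω, ∀ k a b : Fin n,
      pd k (fun v => ∑ i, ψ i a v * ψ i b v) u = 0 := by
  intro u hu k a b
  have hnhds : Ω ∈ nhds u := hΩ.mem_nhds hu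
  have hdiff : ∀ i j, DifferentiableAt ℝ (ψ i j) u := fun i j =>
    (((hψs i j).contDiffAt hnhds).differentiableAt (by simp))
  -- Leibniz rule
  have hstep : pd k (fun v => ∑ i, ψ i a v * ψ i b v) u =
      ∑ i, (ψ i a u * pd k (ψ i b) u + ψ i b u * pd k (ψ i a) u) := by
    unfold pd
    rw [fderiv_fun_sum (A := fun i v => ψ i a v * ψ i b v) (fun i _ => (hdiff i a).mul (hdiff i b))]
    rw [ContinuousLinearMap.sum_apply]
    refine Finset.sum_congr rfl fun i _ => ?_
    rw [fderiv_fun_mul (hdiff i a) (hdiff i b)]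
    simp [smul_eq_mul]
  rw [hstep]
  -- value of the diagonal derivative
  have hdiag : ∀ c : Fin n, pd k (ψ k c) u =
      -∑ j ∈ Finset.univ \ {k}, β k j u * ψ j c u := by
    intro c
    have h0 := hψ2 u hu k c
    rw [Finset.sum_eq_sum_sdiff_singleton_add (Finset.mem_univ k)] at h0
    have : ∀ j ∈ Finset.univ \ {k}, pd j (ψ k c) u = β k j u * ψ j c u := by
      intro j hj
      have hjk : k ≠ j := by
        simp only [Finset.mem_sdiff, Finset.mem_singleton] at hj
        exact fun h => hj.2 h.symm
      exact hψ1 u hu k j c hjk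
    rw [Finset.sum_congr rfl this] at h0
    linear_combination h0
  rw [Finset.sum_eq_sum_sdiff_singleton_add (Finset.mem_univ k)]
  have hoff : ∀ i ∈ Finset.univ \ {k},
      ψ i a u * pd k (ψ i b) u + ψ i b u * pd k (ψ i a) u =
      ψ i a u * (β i k u * ψ k b u) + ψ i b u * (β i k u * ψ k a u) := by
    intro i hi
    have hik : i ≠ k := by
      simp only [Finset.mem_sdiff, Finset.mem_singleton] at hi
      exact hi.2
    rw [hψ1 u hu i k b hik, hψ1 u hu i k a hik]
  rw [Finset.sum_congr rfl hoff, hdiag a, hdiag b]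
  have hterm : ∀ i ∈ Finset.univ \ {k},
      ψ i a u * (β i k u * ψ k b u) + ψ i b u * (β i k u * ψ k a u) =
      ψ k a u * (β k i u * ψ i b u) + ψ k b u * (β k i u * ψ i a u) := by
    intro i hi
    have hik : i ≠ k := by
      simp only [Finset.mem_sdiff, Finset.mem_singleton] at hi
      exact hi.2
    rw [hsym u hu i k hik]
    ring
  rw [Finset.sum_congr rfl hterm, Finset.sum_add_distrib]
  simp only [Finset.mul_sum, mul_neg]
  ring
end

section
/- Let Ω ⊆ ℝ^n be open, let β_{ij}: Ω → ℂ (i ≠ j) be smooth symmetric functions (β_{ij} = β_{ji}), and let ψ_{ij}: Ω → ℂ be smooth functions satisfying ∂_j ψ_{ik} = β_{ij} ψ_{jk} for all i ≠ j and all k. Then for every α and all i ≠ j one has ∂_j(ψ_{i1} ψ_{iα}) = ∂_i(ψ_{j1} ψ_{jα}); i.e., each 1-form ω_α = Σ_i ψ_{i1} ψ_{iα} du_i is closed, so that locally there exist flat coordinate functions x^α with ∂_i x^α = ψ_{i1} ψ_{iα}. -/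
/-- For smooth symmetric rotation coefficients `β` and smooth solutions `ψ` of
`∂_j ψ_{ik} = β_{ij} ψ_{jk}` (`i ≠ j`), one has the closedness relation
`∂_j (ψ_{i1} ψ_{ia}) = ∂_i (ψ_{j1} ψ_{ja})` for all `a` and `i ≠ j`; i.e. each
1-form `ω_a = Σ_i ψ_{i1} ψ_{ia} du_i` is closed (here the column index `1` is the
first index `⟨0, hn⟩` of `Fin n`). -/
theorem one_forms_closed (n : ℕ) (hn : 0 < n) (Ω : Set (Fin n → ℝ)) (hΩ : IsOpen Ω)
    (β : Fin n → Fin n → (Fin n → ℝ) → ℂ)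
    (ψ : Fin n → Fin n → (Fin n → ℝ) → ℂ)
    (hβs : ∀ i j, i ≠ j → ContDiffOn ℝ (⊤ : ℕ∞) (β i j) Ω)
    (hψs : ∀ i j, ContDiffOn ℝ (⊤ : ℕ∞) (ψ i j) Ω)
    (hsym : ∀ u ∈ Ω, ∀ i j, i ≠ j → β i j u = β j i u)
    (hψ1 : ∀ u ∈ Ω, ∀ i j k : Fin n, i ≠ j →
      pd j (ψ i k) u = β i j u * ψ j k u) :
    ∀ u ∈ Ω, ∀ a i j : Fin n, i ≠ j →
      pd j (fun v => ψ i ⟨0, hn⟩ v * ψ i a v) u =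
        pd i (fun v => ψ j ⟨0, hn⟩ v * ψ j a v) u := by
  intro u hu a i j hij
  have hmem : Ω ∈ nhds u := hΩ.mem_nhds hu
  have hd : ∀ p q : Fin n, DifferentiableAt ℝ (ψ p q) u :=
    fun p q => ((hψs p q).contDiffAt hmem).differentiableAt (by simp)
  have prod : ∀ (p q : Fin n) (r : Fin n),
      pd r (fun v => ψ p ⟨0, hn⟩ v * ψ p q v) u =
        pd r (ψ p ⟨0, hn⟩) u * ψ p q u + ψ p ⟨0, hn⟩ u * pd r (ψ p q) u := by
    intro p q r
    unfold pd
    rw [fderiv_fun_mul (hd p ⟨0, hn⟩) (hd p q)]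
    simp only [ContinuousLinearMap.add_apply, ContinuousLinearMap.smul_apply, smul_eq_mul]
    ring
  rw [prod, prod, hψ1 u hu i j ⟨0, hn⟩ hij, hψ1 u hu i j a hij,
    hψ1 u hu j i ⟨0, hn⟩ hij.symm, hψ1 u hu j i a hij.symm,
    hsym u hu i j hij]
  ring
end
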